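/- arXiv:2112.08483 — 6 statements merged into one kernel-verified Lean document; each statement's English description precedes it below -/
import Mathlib

section
/- The idempotent P = N̄₁⋯N̄ₙ satisfies the fundamental annihilation relations: P·(ρ) = 0 for every covector ρ ∈ V*, and (v)·P = 0 for every vector v ∈ V. -/
noncomputable section

open CliffordAlgebra

variable (F : Type*) [Field F] (V : Type*) [AddCommGroup V] [Module F V]

/-- The quadratic form `Q[v ⊕ α] = α v` on `W = V ⊕ V*`. -/
def Qf : QuadraticForm F (V × Module.Dual F V) where
  toFun w := w.2 w.1
  toFun_smul a w := by simp [smul_eq_mul, mul_assoc]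
  exists_companion' :=
    ⟨LinearMap.mk₂ F (fun w w' => w.2 w'.1 + w'.2 w.1)
      (fun m m' n => by simp; ring) (fun c m n => by simp; ring)
      (fun m n n' => by simp; ring) (fun c m n => by simp; ring),
     fun w w' => by simp; ring⟩

/-- Image of a vector `v ∈ V` in the Clifford algebra. -/
def ιv (v : V) : CliffordAlgebra (Qf F V) := ι (Qf F V) (v, 0)

/-- Image of a covector `α ∈ V*` in the Clifford algebra. -/
def ιd (α : Module.Dual F V) : CliffordAlgebra (Qf F V) := ι (Qf F V) ((0 : V), α)

variable {n : ℕ} (bV : Module.Basis (Fin n) F V)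

/-- The fundamental idempotent `P = N̄₁⋯N̄ₙ` with `N̄ⱼ = (eⱼ)(eʲ)`. -/
def Pel : CliffordAlgebra (Qf F V) :=
  (List.ofFn fun j : Fin n => ιv F V (bV j) * ιd F V (bV.coord j)).prod

/-! Since `eʲ` squares to zero and anticommutes with both `eₖ` and `eᵏ` for `k ≠ j`, it commutes
with every `N̄ₖ`, `k ≠ j`, and can be moved left until it meets `N̄ⱼ = (eⱼ)(eʲ)`, which it kills;
symmetrically `(eᵢ)` is moved right until it meets `N̄ᵢ`. Both sides of the theorem are linear,
so checking them on the bases `eʲ` and `eᵢ` suffices. -/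

namespace List

variable {M : Type*} [MonoidWithZero M]

theorem prod_mul_eq_zero_of_mem {l : List M} {x y : M} (hy : y ∈ l) (hyx : y * x = 0)
    (hcomm : ∀ z ∈ l, z ≠ y → Commute x z) : l.prod * x = 0 := by
  induction l with
  | nil => simp at hy
  | cons a t ih =>
    rw [prod_cons, mul_assoc]
    by_cases hyt : y ∈ t
    · rw [ih hyt fun z hz => hcomm z (mem_cons_of_mem a hz), mul_zero]
    · obtain rfl : y = a := (mem_cons.mp hy).resolve_right hyt
      have hxt : Commute x t.prod := Commute.list_prod_right _ _ fun z hz =>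
        hcomm z (mem_cons_of_mem y hz) fun h => hyt (h ▸ hz)
      rw [← hxt.eq, ← mul_assoc, hyx, zero_mul]

theorem mul_prod_eq_zero_of_mem {l : List M} {x y : M} (hy : y ∈ l) (hxy : x * y = 0)
    (hcomm : ∀ z ∈ l, z ≠ y → Commute x z) : x * l.prod = 0 := by
  induction l with
  | nil => simp at hy
  | cons a t ih =>
    rw [prod_cons, ← mul_assoc]
    by_cases hya : y = a
    · rw [← hya, hxy, zero_mul]
    · have hyt : y ∈ t := (mem_cons.mp hy).resolve_left hya
      rw [(hcomm a mem_cons_self (Ne.symm hya)).eq, mul_assoc,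
        ih hyt fun z hz => hcomm z (mem_cons_of_mem a hz), mul_zero]

end List

theorem commute_mul_of_anticommute {A : Type*} [Ring A] {a x y : A}
    (hx : a * x = -(x * a)) (hy : a * y = -(y * a)) : Commute a (x * y) := by
  rw [commute_iff_eq, ← mul_assoc, hx, neg_mul, mul_assoc, hy, mul_neg, neg_neg, mul_assoc]

section Clifford

variable {F V}

@[simp] theorem Qf_apply (w : V × Module.Dual F V) : Qf F V w = w.2 w.1 := rfl

theorem Qf_isOrtho_iff {w w' : V × Module.Dual F V} :
    (Qf F V).IsOrtho w w' ↔ w.2 w'.1 + w'.2 w.1 = 0 := by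
  rw [QuadraticMap.isOrtho_def]
  simp only [Qf_apply, Prod.fst_add, Prod.snd_add, map_add, LinearMap.add_apply]
  constructor <;> intro h <;> linear_combination h

theorem ιv_mul_ιv_self (v : V) : ιv F V v * ιv F V v = 0 := by
  simp [ιv, ι_sq_scalar]

theorem ιd_mul_ιd_self (α : Module.Dual F V) : ιd F V α * ιd F V α = 0 := by
  simp [ιd, ι_sq_scalar]

theorem ιv_mul_ιv_comm (v w : V) : ιv F V v * ιv F V w = -(ιv F V w * ιv F V v) :=
  ι_mul_ι_comm_of_isOrtho <| Qf_isOrtho_iff.mpr <| by simp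

theorem ιd_mul_ιd_comm (α β : Module.Dual F V) :
    ιd F V α * ιd F V β = -(ιd F V β * ιd F V α) :=
  ι_mul_ι_comm_of_isOrtho <| Qf_isOrtho_iff.mpr <| by simp

theorem ιv_mul_ιd_comm {v : V} {α : Module.Dual F V} (h : α v = 0) :
    ιv F V v * ιd F V α = -(ιd F V α * ιv F V v) :=
  ι_mul_ι_comm_of_isOrtho <| Qf_isOrtho_iff.mpr <| by simp [h]

theorem commute_ιd_ιv_mul_ιd {α β : Module.Dual F V} {v : V} (h : α v = 0) :
    Commute (ιd F V α) (ιv F V v * ιd F V β) :=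
  commute_mul_of_anticommute (by rw [ιv_mul_ιd_comm h, neg_neg]) (ιd_mul_ιd_comm α β)

theorem commute_ιv_ιv_mul_ιd {w v : V} {β : Module.Dual F V} (h : β w = 0) :
    Commute (ιv F V w) (ιv F V v * ιd F V β) :=
  commute_mul_of_anticommute (ιv_mul_ιv_comm w v) (ιv_mul_ιd_comm h)

variable {n : ℕ} (bV : Module.Basis (Fin n) F V)

theorem Pel_mul_ιd_coord (j : Fin n) : Pel F V bV * ιd F V (bV.coord j) = 0 := by
  refine List.prod_mul_eq_zero_of_mem (List.mem_ofFn.mpr ⟨j, rfl⟩)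
    (by rw [mul_assoc, ιd_mul_ιd_self, mul_zero]) ?_
  rintro _ hz hne
  obtain ⟨k, rfl⟩ := List.mem_ofFn.mp hz
  have hkj : k ≠ j := by rintro rfl; exact hne rfl
  exact commute_ιd_ιv_mul_ιd (by simp [hkj])

theorem ιv_basis_mul_Pel (i : Fin n) : ιv F V (bV i) * Pel F V bV = 0 := by
  refine List.mul_prod_eq_zero_of_mem (List.mem_ofFn.mpr ⟨i, rfl⟩)
    (by rw [← mul_assoc, ιv_mul_ιv_self, zero_mul]) ?_
  rintro _ hz hne
  obtain ⟨k, rfl⟩ := List.mem_ofFn.mp hz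
  have hik : i ≠ k := by rintro rfl; exact hne rfl
  exact commute_ιv_ιv_mul_ιd (by simp [hik])

end Clifford

/-- `P(ρ) = 0` for every covector `ρ` and `(v)P = 0` for every
vector `v`. -/
theorem stmt6 :
    (∀ ρ : Module.Dual F V, Pel F V bV * ιd F V ρ = 0) ∧
    (∀ v : V, ιv F V v * Pel F V bV = 0) := by
  have hd : LinearMap.mulLeft F (Pel F V bV) ∘ₗ ι (Qf F V) ∘ₗ LinearMap.inr F _ _ = 0 :=
    bV.dualBasis.ext fun j => by
      simpa [Module.Basis.coe_dualBasis, ιd] using Pel_mul_ιd_coord bV j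
  have hv : LinearMap.mulRight F (Pel F V bV) ∘ₗ ι (Qf F V) ∘ₗ LinearMap.inl F _ _ = 0 :=
    bV.ext fun i => by simpa [ιv] using ιv_basis_mul_Pel bV i
  exact ⟨fun ρ => LinearMap.congr_fun hd ρ, fun v => LinearMap.congr_fun hv v⟩
end
end

section
/- Let g be a nondegenerate symmetric bilinear form on V with musical isomorphism ♯ : V* → V (so that g(♯α, v) = α(v)), and define bᵅ = (α)P + P(♯α) in Cl(Q). Then the elements bᵅ satisfy the DKP (Duffin–Kemmer–Petiau) relation: b^{α₁} b^{α₂} b^{α₃} + b^{α₃} b^{α₂} b^{α₁} = g⁻¹(α₁,α₂) b^{α₃} + g⁻¹(α₃,α₂) b^{α₁}, where g⁻¹(α,β) = α(♯β). -/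
noncomputable section

open CliffordAlgebra

variable (F : Type*) [Field F] (V : Type*) [AddCommGroup V] [Module F V]

variable (g : LinearMap.BilinForm F V) (sharp : Module.Dual F V ≃ₗ[F] V)
variable (P : CliffordAlgebra (Qf F V))

/-- the elements `bᵅ = (α)P + P(♯α)` satisfy the DKP relation
`b^{α₁}b^{α₂}b^{α₃} + b^{α₃}b^{α₂}b^{α₁} = g⁻¹(α₁,α₂)b^{α₃} + g⁻¹(α₃,α₂)b^{α₁}`
where `g⁻¹(α,β) = α(♯β)`. -/
theorem stmt11
    (hgsymm : ∀ v w : V, g v w = g w v)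
    (hsharp : ∀ (α : Module.Dual F V) (v : V), g (sharp α) v = α v)
    (hP2 : P * P = P)
    (hPd : ∀ ρ : Module.Dual F V, P * ιd F V ρ = 0)
    (hvP : ∀ v : V, ιv F V v * P = 0)
    (α₁ α₂ α₃ : Module.Dual F V) :
    letI b : Module.Dual F V → CliffordAlgebra (Qf F V) :=
      fun α => ιd F V α * P + P * ιv F V (sharp α)
    b α₁ * b α₂ * b α₃ + b α₃ * b α₂ * b α₁ =
      α₁ (sharp α₂) • b α₃ + α₃ (sharp α₂) • b α₁ := by
  have hcomm : ∀ (v : V) (γ : Module.Dual F V),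
      ιv F V v * ιd F V γ = algebraMap F _ (γ v) - ιd F V γ * ιv F V v := by
    intro v γ
    have h := CliffordAlgebra.ι_mul_ι_add_swap (Q := Qf F V) (v, 0) ((0 : V), γ)
    have hp : QuadraticMap.polar (Qf F V) (v, 0) ((0 : V), γ) = γ v := by
      simp only [QuadraticMap.polar, Qf, Prod.mk_add_mk, add_zero, zero_add]
      show γ v - (0 : Module.Dual F V) v - γ (0 : V) = γ v
      simp
    rw [hp] at h
    rw [show ιv F V v * ιd F V γ = ι (Qf F V) (v, 0) * ι (Qf F V) ((0:V), γ) from rfl]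
    rw [eq_sub_iff_add_eq]
    exact h
  have h1 : ∀ (ρ : Module.Dual F V) (x : CliffordAlgebra (Qf F V)),
      P * (ιd F V ρ * x) = 0 := by
    intro ρ x; rw [← mul_assoc, hPd, zero_mul]
  have h2 : ∀ (v : V) (x : CliffordAlgebra (Qf F V)),
      ιv F V v * (P * x) = 0 := by
    intro v x; rw [← mul_assoc, hvP, zero_mul]
  have h3 : ∀ x : CliffordAlgebra (Qf F V), P * (P * x) = P * x := by
    intro x; rw [← mul_assoc, hP2]
  have h4 : ∀ (v : V) (γ : Module.Dual F V) (x : CliffordAlgebra (Qf F V)),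
      ιv F V v * (ιd F V γ * x) = γ v • x - ιd F V γ * (ιv F V v * x) := by
    intro v γ x
    rw [← mul_assoc, hcomm, sub_mul, Algebra.algebraMap_eq_smul_one, smul_mul_assoc,
      one_mul, mul_assoc]
  have hsymm : ∀ β γ : Module.Dual F V, β (sharp γ) = γ (sharp β) := by
    intro β γ
    rw [← hsharp β (sharp γ), hgsymm, hsharp]
  simp only []
  simp only [mul_add, add_mul, mul_assoc, h1, h2, h3, h4, hPd, hvP, hP2, mul_zero,
    zero_mul, mul_sub, sub_mul, smul_mul_assoc, mul_smul_comm, zero_add, add_zero,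
    smul_add, smul_sub, sub_zero, zero_sub, smul_zero, smul_smul]
  rw [hsymm α₂ α₁, hsymm α₂ α₃]
  module
end
end

section
/- With the same data, the elements b̲ᵅ = (α)P − P(♯α) satisfy the DKP relation with negative metric: b̲^{α₁} b̲^{α₂} b̲^{α₃} + b̲^{α₃} b̲^{α₂} b̲^{α₁} = −g⁻¹(α₁,α₂) b̲^{α₃} − g⁻¹(α₃,α₂) b̲^{α₁}. -/
noncomputable section

open CliffordAlgebra

variable (F : Type*) [Field F] (V : Type*) [AddCommGroup V] [Module F V]

variable (g : LinearMap.BilinForm F V) (sharp : Module.Dual F V ≃ₗ[F] V)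
variable (P : CliffordAlgebra (Qf F V))

/-- the elements `b̲ᵅ = (α)P − P(♯α)` satisfy the DKP relation
with the negative metric. -/
theorem stmt12
    (hgsymm : ∀ v w : V, g v w = g w v)
    (hsharp : ∀ (α : Module.Dual F V) (v : V), g (sharp α) v = α v)
    (hP2 : P * P = P)
    (hPd : ∀ ρ : Module.Dual F V, P * ιd F V ρ = 0)
    (hvP : ∀ v : V, ιv F V v * P = 0)
    (α₁ α₂ α₃ : Module.Dual F V) :
    letI b : Module.Dual F V → CliffordAlgebra (Qf F V) :=
      fun α => ιd F V α * P - P * ιv F V (sharp α)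
    b α₁ * b α₂ * b α₃ + b α₃ * b α₂ * b α₁ =
      -(α₁ (sharp α₂)) • b α₃ - α₃ (sharp α₂) • b α₁ := by
  beta_reduce
  -- the basic anticommutation relation between vectors and covectors
  have hswap : ∀ (ρ : Module.Dual F V) (v : V),
      ιv F V v * ιd F V ρ = (ρ v) • (1 : CliffordAlgebra (Qf F V)) - ιd F V ρ * ιv F V v := by
    intro ρ v
    have h := CliffordAlgebra.ι_mul_ι_add_swap (Q := Qf F V) (v, 0) ((0 : V), ρ)
    have hp : QuadraticMap.polar (Qf F V) (v, 0) ((0 : V), ρ) = ρ v := by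
      simp only [QuadraticMap.polar]
      show ((0 : Module.Dual F V) + ρ) (v + 0) - (0 : Module.Dual F V) v - ρ 0 = ρ v
      simp
    rw [hp, Algebra.algebraMap_eq_smul_one] at h
    exact eq_sub_of_add_eq h
  have hswap' : ∀ (x : CliffordAlgebra (Qf F V)) (ρ : Module.Dual F V) (v : V),
      x * ιv F V v * ιd F V ρ = (ρ v) • x - x * ιd F V ρ * ιv F V v := by
    intro x ρ v
    rw [mul_assoc, hswap, mul_sub, mul_smul_comm, mul_one, mul_assoc]
  have h1 : ∀ (x : CliffordAlgebra (Qf F V)) (ρ : Module.Dual F V),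
      x * P * ιd F V ρ = 0 := fun x ρ => by rw [mul_assoc, hPd, mul_zero]
  have h2 : ∀ (x : CliffordAlgebra (Qf F V)) (v : V),
      x * ιv F V v * P = 0 := fun x v => by rw [mul_assoc, hvP, mul_zero]
  have hP2' : ∀ (x : CliffordAlgebra (Qf F V)), x * P * P = x * P :=
    fun x => by rw [mul_assoc, hP2]
  -- symmetry of the induced form on the dual
  have hsym : ∀ α β : Module.Dual F V, α (sharp β) = β (sharp α) := by
    intro α β
    rw [← hsharp α (sharp β), ← hsharp β (sharp α), hgsymm]
  -- the triple product
  have key : ∀ α β γ : Module.Dual F V,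
      (ιd F V α * P - P * ιv F V (sharp α)) * (ιd F V β * P - P * ιv F V (sharp β))
        * (ιd F V γ * P - P * ιv F V (sharp γ)) =
        -((γ (sharp β)) • (ιd F V α * P)) + (β (sharp α)) • (P * ιv F V (sharp γ)) := by
    intro α β γ
    have s1 : (ιd F V α * P - P * ιv F V (sharp α)) * (ιd F V β * P - P * ιv F V (sharp β))
        = -(ιd F V α * P * ιv F V (sharp β)) - (β (sharp α)) • P := by
      have t1 : (ιd F V α * P) * (ιd F V β * P) = 0 := by
        rw [← mul_assoc, h1, zero_mul]
      have t2 : (ιd F V α * P) * (P * ιv F V (sharp β))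
          = ιd F V α * P * ιv F V (sharp β) := by
        rw [← mul_assoc, hP2']
      have t3 : (P * ιv F V (sharp α)) * (ιd F V β * P) = (β (sharp α)) • P := by
        rw [← mul_assoc, hswap', hPd, zero_mul, sub_zero, smul_mul_assoc, hP2]
      have t4 : (P * ιv F V (sharp α)) * (P * ιv F V (sharp β)) = 0 := by
        rw [← mul_assoc, h2, zero_mul]
      rw [sub_mul, mul_sub, mul_sub, t1, t2, t3, t4]
      abel
    rw [s1]
    have u1 : (ιd F V α * P * ιv F V (sharp β)) * (ιd F V γ * P)
        = (γ (sharp β)) • (ιd F V α * P) := by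
      rw [← mul_assoc, hswap', h1, zero_mul, sub_zero, smul_mul_assoc, hP2']
    have u2 : (ιd F V α * P * ιv F V (sharp β)) * (P * ιv F V (sharp γ)) = 0 := by
      rw [← mul_assoc, h2, zero_mul]
    have u3 : ((β (sharp α)) • P) * (ιd F V γ * P) = 0 := by
      rw [smul_mul_assoc, ← mul_assoc, hPd, zero_mul, smul_zero]
    have u4 : ((β (sharp α)) • P) * (P * ιv F V (sharp γ))
        = (β (sharp α)) • (P * ιv F V (sharp γ)) := by
      rw [smul_mul_assoc, ← mul_assoc, hP2]
    rw [sub_mul, mul_sub, mul_sub, neg_mul, neg_mul, u1, u2, u3, u4]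
    abel
  rw [key α₁ α₂ α₃, key α₃ α₂ α₁, hsym α₂ α₁, hsym α₂ α₃]
  show _ = -(α₁ (sharp α₂)) • (ιd F V α₃ * P - P * ιv F V (sharp α₃))
      - (α₃ (sharp α₂)) • (ιd F V α₁ * P - P * ιv F V (sharp α₁))
  rw [smul_sub, smul_sub]
  module
end
end

section
/- The elements βᵢ = P(eᵢ) + (g_{ij}eʲ)P, built from an orthonormal-indexed basis, satisfy the standard DKP relation βᵢβⱼβₖ + βₖβⱼβᵢ = g_{ij}βₖ + g_{kj}βᵢ, where g_{ij} = g(eᵢ,eⱼ). -/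
/-!
Abstractly, let `P` be idempotent and let `uₐ`, `wₐ` satisfy `uₐ P = 0`, `P wₐ = 0` and
`uₐ w_b + w_b uₐ = c a b`. Then `P uₐ w_b P = c a b • P`, so expanding `βₐ = P uₐ + wₐ P` gives
`βₐ β_b = c a b • P + wₐ P u_b` and `βₐ β_b β_d = c a b • P u_d + c b d • wₐ P`; adding the
product in reverse order and using the symmetry of `c` yields the DKP relation. In the Clifford
algebra of `V ⊕ V*` take `uₐ = eₐ` and `wₐ = g(eₐ, ·)`, whose anticommutator is `g(eₐ, e_b)`.
-/

noncomputable section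

open CliffordAlgebra

variable (F : Type*) [Field F] (V : Type*) [AddCommGroup V] [Module F V]

variable {n : ℕ} (bV : Module.Basis (Fin n) F V)

section DKP

variable {R A ι : Type*} [CommSemiring R] [Ring A] [Algebra R A]
  {P : A} {u w : ι → A} {c : ι → ι → R}

theorem idempotent_mul_mul_mul_idempotent (hP : P * P = P) {x y : A} {r : R}
    (hxy : x * y + y * x = algebraMap R A r) (hPy : P * y = 0) :
    P * x * y * P = r • P := by
  have hx : x * y = algebraMap R A r - y * x := eq_sub_of_add_eq hxy
  rw [mul_assoc P x y, hx, mul_sub, sub_mul, ← mul_assoc P y, hPy, zero_mul, zero_mul, sub_zero,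
    ← Algebra.commutes, ← Algebra.smul_def, smul_mul_assoc, hP]

theorem dkp_mul (hP : P * P = P) (hu : ∀ a, u a * P = 0) (hw : ∀ a, P * w a = 0)
    (huw : ∀ a b, u a * w b + w b * u a = algebraMap R A (c a b)) (a b : ι) :
    (P * u a + w a * P) * (P * u b + w b * P) = c a b • P + w a * P * u b := by
  have hPuwP := idempotent_mul_mul_mul_idempotent hP (huw a b) (hw b)
  calc (P * u a + w a * P) * (P * u b + w b * P)
      = P * (u a * P) * u b + P * u a * w b * P + w a * (P * P) * u b + w a * (P * w b) * P := by
        noncomm_ring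
    _ = c a b • P + w a * P * u b := by rw [hu, hw, hP, hPuwP]; noncomm_ring

theorem dkp_mul_mul (hP : P * P = P) (hu : ∀ a, u a * P = 0) (hw : ∀ a, P * w a = 0)
    (huw : ∀ a b, u a * w b + w b * u a = algebraMap R A (c a b)) (a b d : ι) :
    (P * u a + w a * P) * (P * u b + w b * P) * (P * u d + w d * P) =
      c a b • (P * u d) + c b d • (w a * P) := by
  have hPuwP := idempotent_mul_mul_mul_idempotent hP (huw b d) (hw d)
  rw [dkp_mul hP hu hw huw]
  calc (c a b • P + w a * P * u b) * (P * u d + w d * P)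
      = c a b • ((P * P) * u d) + c a b • ((P * w d) * P) + w a * P * (u b * P) * u d +
          w a * (P * u b * w d * P) := by
        simp only [add_mul, mul_add, smul_mul_assoc, mul_assoc]; abel
    _ = c a b • (P * u d) + c b d • (w a * P) := by
        rw [hP, hw, hu, hPuwP, mul_smul_comm]
        simp only [mul_zero, zero_mul, smul_zero, add_zero]

theorem dkp_relation (hP : P * P = P) (hu : ∀ a, u a * P = 0) (hw : ∀ a, P * w a = 0)
    (huw : ∀ a b, u a * w b + w b * u a = algebraMap R A (c a b))
    (hc : ∀ a b, c a b = c b a) (i j k : ι) :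
    letI β : ι → A := fun a => P * u a + w a * P
    β i * β j * β k + β k * β j * β i = c i j • β k + c k j • β i := by
  simp only [dkp_mul_mul hP hu hw huw, smul_add, hc j]
  abel

end DKP

theorem ιv_mul_ιd_add_ιd_mul_ιv (v : V) (α : Module.Dual F V) :
    ιv F V v * ιd F V α + ιd F V α * ιv F V v = algebraMap F _ (α v) := by
  rw [ιv, ιd, ι_mul_ι_add_swap, QuadraticMap.polar]
  congr 1
  simp [Qf]

/-- the elements `βᵢ = P(eᵢ) + (g_{ij}eʲ)P` satisfy the standard
DKP relation `βᵢβⱼβₖ + βₖβⱼβᵢ = g_{ij}βₖ + g_{kj}βᵢ`. -/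
theorem stmt14 (g : LinearMap.BilinForm F V)
    (hgsymm : ∀ v w : V, g v w = g w v)
    (P : CliffordAlgebra (Qf F V))
    (hP2 : P * P = P)
    (hPd : ∀ ρ : Module.Dual F V, P * ιd F V ρ = 0)
    (hvP : ∀ v : V, ιv F V v * P = 0)
    (i j k : Fin n) :
    letI beta : Fin n → CliffordAlgebra (Qf F V) :=
      fun i => P * ιv F V (bV i) + ιd F V (∑ l, g (bV i) (bV l) • bV.coord l) * P
    beta i * beta j * beta k + beta k * beta j * beta i =
      g (bV i) (bV j) • beta k + g (bV k) (bV j) • beta i := by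
  have hanticomm (a b : Fin n) :
      ιv F V (bV a) * ιd F V (∑ l, g (bV b) (bV l) • bV.coord l) +
        ιd F V (∑ l, g (bV b) (bV l) • bV.coord l) * ιv F V (bV a) =
      algebraMap F _ (g (bV a) (bV b)) := by
    rw [ιv_mul_ιd_add_ιd_mul_ιv, bV.sum_dual_apply_smul_coord, hgsymm]
  exact dkp_relation hP2 (fun _ => hvP _) (fun _ => hPd _) hanticomm (fun _ _ => hgsymm _ _) i j k
end
end

section
/- The element 1_DKP = P + Σᵢ ⁱPᵢ = P + Σᵢ (eⁱ)P(eᵢ) acts as a two-sided identity for the subalgebra generated by the DKP elements b̲ᵅ = (α)P − P(♯α): 1_DKP · b̲ᵅ = b̲ᵅ · 1_DKP = b̲ᵅ for all α ∈ V*. -/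
noncomputable section

open CliffordAlgebra

variable (F : Type*) [Field F] (V : Type*) [AddCommGroup V] [Module F V]

variable {n : ℕ} (bV : Module.Basis (Fin n) F V)

/-!
Since `P` is annihilated by vectors on the left and covectors on the right, in
`1_DKP * (P * y)` and `(y * P) * 1_DKP` only the idempotent summand `P` survives.
For the two halves `(α)P` and `P(v)` of a DKP generator one moves the vector (resp.
covector) of each summand `(eⁱ)P(eᵢ)` across `(α)` (resp. `(v)`) with the Clifford
relation `(v)(α) + (α)(v) = α v`; what remains is `Σᵢ α(eᵢ) (eⁱ)P = (α)P`
(resp. `Σᵢ eⁱ(v) P(eᵢ) = P(v)`) by expanding in the dual bases.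
-/

namespace CliffordAlgebra

variable {F V}

theorem ιv_mul_ιd_add_ιd_mul_ιv (v : V) (β : Module.Dual F V) :
    ιv F V v * ιd F V β + ιd F V β * ιv F V v = algebraMap F _ (β v) := by
  have hpolar : QuadraticMap.polar (Qf F V) (v, 0) (0, β) = β v := by
    simp [QuadraticMap.polar, Qf]
  rw [← hpolar]
  exact ι_mul_ι_add_swap _ _

theorem ιv_mul_ιd_mul (v : V) (β : Module.Dual F V) (x : CliffordAlgebra (Qf F V)) :
    ιv F V v * (ιd F V β * x) = β v • x - ιd F V β * (ιv F V v * x) := by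
  rw [← mul_assoc, eq_sub_of_add_eq (ιv_mul_ιd_add_ιd_mul_ιv v β), sub_mul, mul_assoc,
    Algebra.smul_def]

theorem sum_smul_ιd_coord (α : Module.Dual F V) :
    ∑ i, α (bV i) • ιd F V (bV.coord i) = ιd F V α := by
  have h := congrArg (ι (Qf F V) ∘ₗ LinearMap.inr F V _) (bV.sum_dual_apply_smul_coord α)
  simp only [map_sum, map_smul] at h
  exact h

theorem sum_coord_smul_ιv (v : V) :
    ∑ i, bV.coord i v • ιv F V (bV i) = ιv F V v := by
  have h := congrArg (ι (Qf F V) ∘ₗ LinearMap.inl F V (Module.Dual F V)) (bV.sum_repr v)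
  simp only [map_sum, map_smul] at h
  exact h

def dkpOne (P : CliffordAlgebra (Qf F V)) : CliffordAlgebra (Qf F V) :=
  P + ∑ i, ιd F V (bV.coord i) * P * ιv F V (bV i)

variable {P : CliffordAlgebra (Qf F V)} (hP2 : P * P = P)
  (hPd : ∀ ρ : Module.Dual F V, P * ιd F V ρ = 0) (hvP : ∀ v : V, ιv F V v * P = 0)
include hP2

include hvP in
theorem dkpOne_mul_idempotent_mul (y : CliffordAlgebra (Qf F V)) :
    dkpOne bV P * (P * y) = P * y := by
  have hterm : ∀ i, ιd F V (bV.coord i) * P * ιv F V (bV i) * (P * y) = 0 := fun i => by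
    rw [mul_assoc _ (ιv F V _), ← mul_assoc (ιv F V _), hvP, zero_mul, mul_zero]
  rw [dkpOne, add_mul, ← mul_assoc P P, hP2, Finset.sum_mul]
  simp only [hterm, Finset.sum_const_zero, add_zero]

include hPd in
theorem mul_idempotent_mul_dkpOne (y : CliffordAlgebra (Qf F V)) :
    y * P * dkpOne bV P = y * P := by
  have hterm : ∀ i, y * P * (ιd F V (bV.coord i) * P * ιv F V (bV i)) = 0 := fun i => by
    rw [mul_assoc y P, ← mul_assoc P, ← mul_assoc P, hPd, zero_mul, zero_mul, mul_zero]
  rw [dkpOne, mul_add, mul_assoc y P P, hP2, Finset.mul_sum]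
  simp only [hterm, Finset.sum_const_zero, add_zero]

include hPd in
theorem dkpOne_mul_ιd_mul (α : Module.Dual F V) :
    dkpOne bV P * (ιd F V α * P) = ιd F V α * P := by
  have hterm : ∀ i, ιd F V (bV.coord i) * P * ιv F V (bV i) * (ιd F V α * P) =
      α (bV i) • (ιd F V (bV.coord i) * P) := fun i => by
    rw [mul_assoc, mul_assoc, ιv_mul_ιd_mul, mul_sub, ← mul_assoc P (ιd F V α), hPd, zero_mul,
      sub_zero, mul_smul_comm, mul_smul_comm, hP2]
  rw [dkpOne, add_mul, ← mul_assoc P, hPd, zero_mul, zero_add, Finset.sum_mul]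
  simp only [hterm, ← smul_mul_assoc, ← Finset.sum_mul, sum_smul_ιd_coord]

include hvP in
theorem mul_ιv_mul_dkpOne (v : V) :
    P * ιv F V v * dkpOne bV P = P * ιv F V v := by
  have hterm : ∀ i, P * ιv F V v * (ιd F V (bV.coord i) * P * ιv F V (bV i)) =
      bV.coord i v • (P * ιv F V (bV i)) := fun i => by
    simp only [mul_assoc]
    rw [ιv_mul_ιd_mul, ← mul_assoc (ιv F V v) P, hvP, zero_mul, mul_zero, sub_zero,
      mul_smul_comm, ← mul_assoc, hP2]
  rw [dkpOne, mul_add, mul_assoc P (ιv F V v) P, hvP, mul_zero, zero_add, Finset.mul_sum]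
  simp only [hterm, ← mul_smul_comm, ← Finset.mul_sum, sum_coord_smul_ιv]

end CliffordAlgebra

theorem stmt15 (sharp : Module.Dual F V ≃ₗ[F] V)
    (P : CliffordAlgebra (Qf F V))
    (hP2 : P * P = P)
    (hPd : ∀ ρ : Module.Dual F V, P * ιd F V ρ = 0)
    (hvP : ∀ v : V, ιv F V v * P = 0) :
    letI oneDKP : CliffordAlgebra (Qf F V) :=
      P + ∑ i : Fin n, ιd F V (bV.coord i) * P * ιv F V (bV i)
    ∀ α : Module.Dual F V,
      oneDKP * (ιd F V α * P - P * ιv F V (sharp α)) =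
        ιd F V α * P - P * ιv F V (sharp α) ∧
      (ιd F V α * P - P * ιv F V (sharp α)) * oneDKP =
        ιd F V α * P - P * ιv F V (sharp α) := by
  intro α
  refine ⟨?_, ?_⟩
  · show dkpOne bV P * _ = _
    rw [mul_sub, dkpOne_mul_ιd_mul bV hP2 hPd, dkpOne_mul_idempotent_mul bV hP2 hvP]
  · show _ * dkpOne bV P = _
    rw [sub_mul, mul_idempotent_mul_dkpOne bV hP2 hPd, mul_ιv_mul_dkpOne bV hP2 hvP]
end
end

section
/- The DKP generators b̲ᵅ preserve the subspace Z_{(p)} spanned by elements of the form P_I + ᵞP_I (where I is an antisymmetric multi-index of length p): explicitly, for Z = P_I + ᵞP_I one has b̲ᵅ Z = ᵅP_I − g⁻¹(α,γ) P_I, which lies again in Z_{(p)}. Here P_I = P(e_{i₁})⋯(e_{i_p}) and ᵞP_I = (γ)P(e_{i₁})⋯(e_{i_p}). -/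
noncomputable section

open CliffordAlgebra

variable (F : Type*) [Field F] (V : Type*) [AddCommGroup V] [Module F V]

variable (P : CliffordAlgebra (Qf F V))

/-- `P_I = P(e_{i₁})⋯(e_{i_p})` for a list `I` of vectors. -/
def PI (l : List V) : CliffordAlgebra (Qf F V) :=
  P * (l.map fun v => ιv F V v).prod

/-- `ᵅP_I = (α)P(e_{i₁})⋯(e_{i_p})`. -/
def aPI (α : Module.Dual F V) (l : List V) : CliffordAlgebra (Qf F V) :=
  ιd F V α * PI F V P l

/-- The subspace `Z_{(p)}` spanned by the `P_I` and `ᵅP_I` with `|I| = p`. -/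
def Zp (p : ℕ) : Submodule F (CliffordAlgebra (Qf F V)) :=
  Submodule.span F
    {x | ∃ l : List V, l.length = p ∧
      (x = PI F V P l ∨ ∃ β : Module.Dual F V, x = aPI F V P β l)}

lemma iv_mul_id (v : V) (γ : Module.Dual F V) :
    ιv F V v * ιd F V γ = algebraMap F _ (γ v) - ιd F V γ * ιv F V v := by
  have h := ι_mul_ι_add_swap (Q := Qf F V) (v, 0) ((0 : V), γ)
  have hpolar : QuadraticMap.polar (Qf F V) (v, 0) ((0 : V), γ) = γ v := by
    show (Qf F V) ((v, 0) + ((0 : V), γ)) - (Qf F V) (v, 0) - (Qf F V) ((0 : V), γ) = γ v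
    show ((0 : Module.Dual F V) + γ) (v + 0) - (0 : Module.Dual F V) v - γ (0 : V) = γ v
    simp
  rw [hpolar] at h
  exact eq_sub_of_add_eq h

/-- the DKP generators `b̲ᵅ = (α)P − P(♯α)` preserve `Z_{(p)}`:
explicitly `b̲ᵅ (P_I + ᵞP_I) = ᵅP_I − g⁻¹(α,γ) P_I ∈ Z_{(p)}`. -/
theorem stmt16 (g : LinearMap.BilinForm F V) (sharp : Module.Dual F V ≃ₗ[F] V)
    (hgsymm : ∀ v w : V, g v w = g w v)
    (hsharp : ∀ (α : Module.Dual F V) (v : V), g (sharp α) v = α v)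
    (hP2 : P * P = P)
    (hPd : ∀ ρ : Module.Dual F V, P * ιd F V ρ = 0)
    (hvP : ∀ v : V, ιv F V v * P = 0)
    (p : ℕ) (l : List V) (hl : l.length = p) (α γ : Module.Dual F V) :
    (ιd F V α * P - P * ιv F V (sharp α)) * (PI F V P l + aPI F V P γ l) =
      aPI F V P α l - α (sharp γ) • PI F V P l ∧
    (ιd F V α * P - P * ιv F V (sharp α)) * (PI F V P l + aPI F V P γ l) ∈
      Zp F V P p := by
  have hag : α (sharp γ) = γ (sharp α) := by
    rw [← hsharp α (sharp γ), hgsymm, hsharp]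
  set q := (l.map fun v => ιv F V v).prod with hq
  set s := ιv F V (sharp α) with hs
  have key : (ιd F V α * P - P * s) * (PI F V P l + aPI F V P γ l) =
      aPI F V P α l - α (sharp γ) • PI F V P l := by
    have hPI : PI F V P l = P * q := rfl
    have haPI : ∀ β : Module.Dual F V, aPI F V P β l = ιd F V β * (P * q) := by
      intro β; rfl
    have m1 : ιd F V α * P * (P * q) = ιd F V α * (P * q) := by
      rw [mul_assoc (ιd F V α) P (P * q), ← mul_assoc P P q, hP2]
    have m2 : P * s * (P * q) = 0 := by
      rw [mul_assoc P s (P * q), ← mul_assoc s P q, hs, hvP, zero_mul, mul_zero]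
    have m3 : ιd F V α * P * (ιd F V γ * (P * q)) = 0 := by
      rw [mul_assoc (ιd F V α) P (ιd F V γ * (P * q)),
        ← mul_assoc P (ιd F V γ) (P * q), hPd, zero_mul, mul_zero]
    have m4 : P * s * (ιd F V γ * (P * q)) = α (sharp γ) • (P * q) := by
      rw [mul_assoc P s (ιd F V γ * (P * q)), ← mul_assoc s (ιd F V γ) (P * q), hs,
        iv_mul_id, sub_mul, mul_sub, mul_assoc (ιd F V γ) (ιv F V (sharp α)) (P * q),
        ← mul_assoc P (ιd F V γ) _, hPd, zero_mul, sub_zero, ← Algebra.smul_def,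
        mul_smul_comm, ← mul_assoc P P q, hP2, hag]
    rw [hPI, haPI γ, haPI α, mul_add, sub_mul, sub_mul, m1, m2, m3, m4]
    abel
  refine ⟨key, ?_⟩
  rw [key]
  have h5 : aPI F V P α l ∈ Zp F V P p :=
    Submodule.subset_span ⟨l, hl, Or.inr ⟨α, rfl⟩⟩
  have h6 : PI F V P l ∈ Zp F V P p :=
    Submodule.subset_span ⟨l, hl, Or.inl rfl⟩
  exact sub_mem h5 (Submodule.smul_mem _ _ h6)
end
end
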